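/- In the setting of a DAG on nodes {1,…,N} in topological order with edge weights θ ∈ ℝ^E and parents P_i nonempty for i ≥ 2, let Ω be bounded on probability simplices of dimension ≤ N, and for γ > 0 let DP_{γΩ}(θ) be the value of the smoothed recursion v₁ = 0, v_i = max_{γΩ}((θ_{i,j} + v_j)_{j∈P_i}), v_N = DP_{γΩ}(θ). Then DP_{γΩ}(θ) → LP(θ) as γ → 0⁺, where LP(θ) is the maximum cumulated weight over paths from node 1 to node N. -/

import Mathlib

/-- The cumulated weight (score) of a path `l = [y₁, …, y_L]`:
`∑_{t=2}^L θ_{y_t, y_{t-1}}`. -/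
noncomputable def pathScore {N : ℕ} (θ : Fin N → Fin N → ℝ) (l : List (Fin N)) : ℝ :=
  ((l.zip l.tail).map (fun p => θ p.2 p.1)).sum

/-- The smoothed max operator over a finite index set `ι`:
`smaxF Ω x = sup_{q ∈ Δ^ι} (⟨q, x⟩ - Ω q)`. -/
noncomputable def smaxF {ι : Type} [Fintype ι] (Ω : (ι → ℝ) → ℝ) (x : ι → ℝ) : ℝ :=
  sSup ((fun q => (∑ i, q i * x i) - Ω q) '' stdSimplex ℝ ι)

lemma smax_bounds {ι : Type} [Fintype ι] [Nonempty ι] [DecidableEq ι]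
    (Ω : (ι → ℝ) → ℝ) (γ L U : ℝ) (hγ : 0 ≤ γ)
    (hL : ∀ q ∈ stdSimplex ℝ ι, L ≤ Ω q) (hU : ∀ q ∈ stdSimplex ℝ ι, Ω q ≤ U)
    (x : ι → ℝ) :
    Finset.univ.sup' Finset.univ_nonempty x - γ * U ≤ smaxF (fun q => γ * Ω q) x ∧
      smaxF (fun q => γ * Ω q) x ≤ Finset.univ.sup' Finset.univ_nonempty x - γ * L := by
  set s := Finset.univ.sup' (Finset.univ_nonempty (α := ι)) x with hs
  have hub : ∀ y ∈ ((fun q => (∑ i, q i * x i) - γ * Ω q) '' stdSimplex ℝ ι), y ≤ s - γ * L := by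
    rintro y ⟨q, hq, rfl⟩
    dsimp only
    have h1 : ∑ i, q i * x i ≤ s := by
      calc ∑ i, q i * x i ≤ ∑ i, q i * s := by
            apply Finset.sum_le_sum
            intro i _
            exact mul_le_mul_of_nonneg_left (Finset.le_sup' x (Finset.mem_univ i)) (hq.1 i)
        _ = s := by rw [← Finset.sum_mul, hq.2, one_mul]
    have h2 : γ * L ≤ γ * Ω q := mul_le_mul_of_nonneg_left (hL q hq) hγ
    linarith
  have hbdd : BddAbove ((fun q => (∑ i, q i * x i) - γ * Ω q) '' stdSimplex ℝ ι) :=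
    ⟨s - γ * L, hub⟩
  obtain ⟨i0, -, hi0⟩ := Finset.exists_mem_eq_sup' (Finset.univ_nonempty (α := ι)) x
  set q0 : ι → ℝ := fun j => if j = i0 then 1 else 0 with hq0
  have hq0mem : q0 ∈ stdSimplex ℝ ι := by
    constructor
    · intro j; by_cases h : j = i0 <;> simp [hq0, h]
    · simp [hq0]
  have hq0sum : (∑ i, q0 i * x i) = x i0 := by
    simp [hq0, ite_mul]
  constructor
  · have hmem : x i0 - γ * Ω q0 ∈ ((fun q => (∑ i, q i * x i) - γ * Ω q) '' stdSimplex ℝ ι) :=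
      ⟨q0, hq0mem, by dsimp only; rw [hq0sum]⟩
    have hle := le_csSup hbdd hmem
    have h2 : γ * Ω q0 ≤ γ * U := mul_le_mul_of_nonneg_left (hU q0 hq0mem) hγ
    rw [smaxF]
    rw [hi0] at hs
    rw [hs]
    linarith
  · exact csSup_le ⟨_, ⟨q0, hq0mem, rfl⟩⟩ hub

lemma abs_sup'_sub_sup'_le {ι : Type} [Fintype ι] [Nonempty ι] (f g : ι → ℝ) (ε : ℝ)
    (h : ∀ i, |f i - g i| ≤ ε) :
    |Finset.univ.sup' Finset.univ_nonempty f - Finset.univ.sup' Finset.univ_nonempty g| ≤ ε := by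
  have key : ∀ (u v : ι → ℝ), (∀ i, |u i - v i| ≤ ε) →
      Finset.univ.sup' Finset.univ_nonempty u ≤ Finset.univ.sup' Finset.univ_nonempty v + ε := by
    intro u v huv
    apply Finset.sup'_le
    intro i _
    have h1 := huv i
    rw [abs_le] at h1
    have h2 := Finset.le_sup' v (Finset.mem_univ i)
    linarith
  have h1 := key f g h
  have h2 := key g f (fun i => by rw [abs_sub_comm]; exact h i)
  rw [abs_le]
  constructor <;> linarith

noncomputable def vrec {N : ℕ} (adj : Fin N → Fin N → Prop) [DecidableRel adj]
    (hadj : ∀ i j : Fin N, adj i j → j < i)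
    (hpar : ∀ i : Fin N, i.1 ≠ 0 → ∃ j, adj i j)
    (θ : Fin N → Fin N → ℝ) : Fin N → ℝ := fun i =>
  if h : i.1 = 0 then 0
  else
    haveI : Nonempty {j // adj i j} := let ⟨j, hj⟩ := hpar i h; ⟨⟨j, hj⟩⟩
    Finset.univ.sup' Finset.univ_nonempty
      (fun j : {j // adj i j} => θ i j.1 + vrec adj hadj hpar θ j.1)
termination_by i => i.1
decreasing_by exact hadj _ j.1 j.2

lemma pathScore_cons {N : ℕ} (θ : Fin N → Fin N → ℝ) (x y : Fin N) (l : List (Fin N)) :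
    pathScore θ (x :: y :: l) = θ y x + pathScore θ (y :: l) := by
  simp [pathScore]

section paths
variable {N : ℕ} (adj : Fin N → Fin N → Prop) [DecidableRel adj]
    (hadj : ∀ i j : Fin N, adj i j → j < i)
    (hpar : ∀ i : Fin N, i.1 ≠ 0 → ∃ j, adj i j)
    (θ : Fin N → Fin N → ℝ)

lemma vrec_zero (i : Fin N) (h : i.1 = 0) : vrec adj hadj hpar θ i = 0 := by
  rw [vrec]; simp [h]

lemma vrec_pos (i : Fin N) (h : i.1 ≠ 0) :
    haveI : Nonempty {j // adj i j} := let ⟨j, hj⟩ := hpar i h; ⟨⟨j, hj⟩⟩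
    vrec adj hadj hpar θ i = Finset.univ.sup' Finset.univ_nonempty
      (fun j : {j // adj i j} => θ i j.1 + vrec adj hadj hpar θ j.1) := by
  rw [vrec]; simp [h]

lemma le_vrec (i : Fin N) (j : Fin N) (hj : adj i j) :
    θ i j + vrec adj hadj hpar θ j ≤ vrec adj hadj hpar θ i := by
  have h : i.1 ≠ 0 := by
    have := hadj i j hj
    omega
  rw [vrec_pos adj hadj hpar θ i h]
  exact Finset.le_sup' (f := fun j : {j // adj i j} => θ i j.1 + vrec adj hadj hpar θ j.1)
    (Finset.mem_univ (⟨j, hj⟩ : {j // adj i j}))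

/-- score from x to the last node, plus v x, is at most v (last). -/
lemma score_le_vrec : ∀ (l : List (Fin N)) (x : Fin N),
    List.Chain' (fun a b => adj b a) (x :: l) →
    vrec adj hadj hpar θ x + pathScore θ (x :: l) ≤
      vrec adj hadj hpar θ ((x :: l).getLast (List.cons_ne_nil _ _)) := by
  intro l
  induction l with
  | nil => intro x _; simp [pathScore]
  | cons y l ih =>
    intro x hc
    simp only [List.Chain', List.isChain_cons_cons] at hc
    have h1 := ih y hc.2
    have h2 := le_vrec adj hadj hpar θ y x hc.1
    rw [pathScore_cons]
    have : (x :: y :: l).getLast (List.cons_ne_nil _ _) =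
        (y :: l).getLast (List.cons_ne_nil _ _) := by
      simp [List.getLast]
    rw [this]
    linarith

/-- existence of a path achieving vrec. -/
lemma exists_path (z : Fin N) (hz : z.1 = 0) : ∀ (n : ℕ) (i : Fin N), i.1 = n →
    ∃ l : List (Fin N), l ≠ [] ∧ l.head? = some z ∧ l.getLast? = some i ∧
      List.Chain' (fun a b => adj b a) l ∧ pathScore θ l = vrec adj hadj hpar θ i := by
  intro n
  induction n using Nat.strong_induction_on with
  | _ n IH =>
    intro i hi
    by_cases h : i.1 = 0
    · have hiz : i = z := Fin.ext (by omega)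
      refine ⟨[z], by simp, by simp, by simp [hiz], List.isChain_singleton _, ?_⟩
      rw [hiz, vrec_zero adj hadj hpar θ z hz]
      simp [pathScore]
    · haveI hne : Nonempty {j // adj i j} := let ⟨j, hj⟩ := hpar i h; ⟨⟨j, hj⟩⟩
      obtain ⟨j0, -, hj0⟩ := Finset.exists_mem_eq_sup' (Finset.univ_nonempty (α := {j // adj i j}))
        (fun j : {j // adj i j} => θ i j.1 + vrec adj hadj hpar θ j.1)
      have hjlt : (j0 : Fin N).1 < n := by
        have := hadj i j0.1 j0.2; omega
      obtain ⟨l, hln, hlh, hll, hlc, hls⟩ := IH j0.1.1 hjlt j0.1 rfl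
      refine ⟨l ++ [i], by simp, ?_, by simp, ?_, ?_⟩
      · rwa [List.head?_append_of_ne_nil _ hln]
      · simp only [List.Chain', List.isChain_append]
        refine ⟨hlc, by simp, ?_⟩
        intro a ha b hb
        simp at hb
        rw [hll] at ha
        simp at ha
        rw [← ha, ← hb]
        exact j0.2
      · obtain ⟨x, t, rfl⟩ := List.exists_cons_of_ne_nil hln
        have hgl : (x :: t).getLast (List.cons_ne_nil _ _) = j0.1 := by
          have := List.getLast?_eq_getLast (l := x :: t) (List.cons_ne_nil _ _)
          rw [hll] at this
          exact (Option.some_injective _ this.symm)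
        have hconcat : ∀ (t : List (Fin N)) (x a : Fin N),
            pathScore θ (x :: (t ++ [a])) =
              pathScore θ (x :: t) + θ a ((x :: t).getLast (List.cons_ne_nil _ _)) := by
          intro t
          induction t with
          | nil => intro x a; simp [pathScore, List.getLast]
          | cons y t' ih =>
            intro x a
            rw [List.cons_append, pathScore_cons, ih y a, pathScore_cons]
            have : (x :: y :: t').getLast (List.cons_ne_nil _ _) =
                (y :: t').getLast (List.cons_ne_nil _ _) := by simp [List.getLast]
            rw [this]
            ring
        rw [List.cons_append, hconcat t x i, hgl, hls]
        rw [vrec_pos adj hadj hpar θ i h, hj0]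
        ring
end paths

/-- vanishing regularization.  If `Ω` is bounded on the relevant
probability simplices and, for each `γ > 0`, `DP_{γΩ}(θ) = V γ (N-1)` is
computed by the recursion smoothed with `γΩ`, then `DP_{γΩ}(θ) → LP(θ)` as
`γ → 0⁺`, `LP(θ)` being the maximum path score from node `0` to node `N-1`. -/
theorem stmt16 (N : ℕ) (hN : 2 ≤ N)
    (adj : Fin N → Fin N → Prop) [DecidableRel adj]
    (hadj : ∀ i j : Fin N, adj i j → j < i)
    (hpar : ∀ i : Fin N, i ≠ ⟨0, by omega⟩ → ∃ j, adj i j)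
    (θ : Fin N → Fin N → ℝ)
    (Ω : ∀ i : Fin N, ({j : Fin N // adj i j} → ℝ) → ℝ)
    (L U : ℝ)
    (hL : ∀ i : Fin N, ∀ q ∈ stdSimplex ℝ {j : Fin N // adj i j}, L ≤ Ω i q)
    (hU : ∀ i : Fin N, ∀ q ∈ stdSimplex ℝ {j : Fin N // adj i j}, Ω i q ≤ U)
    (V : ℝ → Fin N → ℝ)
    (hV0 : ∀ γ : ℝ, 0 < γ → V γ ⟨0, by omega⟩ = 0)
    (hV : ∀ γ : ℝ, 0 < γ → ∀ i : Fin N, i ≠ ⟨0, by omega⟩ →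
      V γ i = smaxF (fun q => γ * Ω i q) (fun j => θ i j.1 + V γ j.1))
    (LP : ℝ)
    (hLP : IsGreatest {s : ℝ | ∃ l : List (Fin N),
        l.head? = some ⟨0, by omega⟩ ∧ l.getLast? = some ⟨N - 1, by omega⟩ ∧
        l.Chain' (fun a b => adj b a) ∧ pathScore θ l = s} LP) :
    Filter.Tendsto (fun γ : ℝ => V γ ⟨N - 1, by omega⟩)
      (nhdsWithin 0 (Set.Ioi 0)) (nhds LP) := by
  have hN0 : 0 < N := by omega
  set z : Fin N := ⟨0, by omega⟩ with hzdef
  set n' : Fin N := ⟨N - 1, by omega⟩ with hn'def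
  have hpar' : ∀ i : Fin N, i.1 ≠ 0 → ∃ j, adj i j := by
    intro i h
    apply hpar
    intro he
    apply h
    rw [he]
  set v := vrec adj hadj hpar' θ with hvdef
  set M := max |L| |U| with hMdef
  have hM : 0 ≤ M := le_trans (abs_nonneg L) (le_max_left _ _)
  -- v n' = LP
  have hvLP : v n' = LP := by
    apply le_antisymm
    · apply hLP.2
      obtain ⟨l, hln, hlh, hll, hlc, hls⟩ :=
        exists_path adj hadj hpar' θ z rfl n'.1 n' rfl
      exact ⟨l, hlh, hll, hlc, hls⟩
    · obtain ⟨l, hlh, hll, hlc, hls⟩ := hLP.1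
      have hln : l ≠ [] := by
        intro h; rw [h] at hlh; simp at hlh
      obtain ⟨x, t, rfl⟩ := List.exists_cons_of_ne_nil hln
      have hx : x = z := by simp at hlh; exact hlh
      have hlast : (x :: t).getLast (List.cons_ne_nil _ _) = n' := by
        have := List.getLast?_eq_getLast (l := x :: t) (List.cons_ne_nil _ _)
        rw [hll] at this
        exact (Option.some_injective _ this.symm)
      have hle := score_le_vrec adj hadj hpar' θ t x hlc
      rw [hlast, hx] at hle
      have hv0 : v z = 0 := vrec_zero adj hadj hpar' θ z rfl
      rw [hx] at hls
      rw [← hls]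
      have : v z + pathScore θ (z :: t) ≤ v n' := hle
      linarith [hv0 ▸ this]
  -- main quantitative bound
  have key : ∀ γ : ℝ, 0 < γ → ∀ (n : ℕ) (i : Fin N), i.1 = n →
      |V γ i - v i| ≤ γ * n * M := by
    intro γ hγ n
    induction n using Nat.strong_induction_on with
    | _ n IH =>
      intro i hi
      by_cases h : i.1 = 0
      · have hiz : i = z := Fin.ext h
        have hn0 : n = 0 := by omega
        have hv0 : v z = 0 := vrec_zero adj hadj hpar' θ z rfl
        rw [hiz, hV0 γ hγ, hv0, hn0]
        simp
      · have hne0 : i ≠ z := by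
          intro he; apply h; rw [he]
        haveI hne : Nonempty {j // adj i j} := let ⟨j, hj⟩ := hpar' i h; ⟨⟨j, hj⟩⟩
        have hVi := hV γ hγ i hne0
        set xγ : {j // adj i j} → ℝ := fun j => θ i j.1 + V γ j.1 with hxγ
        set xv : {j // adj i j} → ℝ := fun j => θ i j.1 + v j.1 with hxv
        have hvi : v i = Finset.univ.sup' Finset.univ_nonempty xv :=
          vrec_pos adj hadj hpar' θ i h
        obtain ⟨hb1, hb2⟩ := smax_bounds (Ω i) γ L U (le_of_lt hγ) (hL i) (hU i) xγ
        have hstep1 : |smaxF (fun q => γ * Ω i q) xγ -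
            Finset.univ.sup' Finset.univ_nonempty xγ| ≤ γ * M := by
          rw [abs_le]
          have hUM : U ≤ M := le_trans (le_abs_self U) (le_max_right _ _)
          have hLM : -L ≤ M := le_trans (neg_le_abs L) (le_max_left _ _)
          have h1 : γ * U ≤ γ * M := mul_le_mul_of_nonneg_left hUM (le_of_lt hγ)
          have h2 : γ * (-L) ≤ γ * M := mul_le_mul_of_nonneg_left hLM (le_of_lt hγ)
          constructor <;> nlinarith
        have hn1 : 1 ≤ n := by omega
        have hstep2 : |Finset.univ.sup' Finset.univ_nonempty xγ -
            Finset.univ.sup' Finset.univ_nonempty xv| ≤ γ * (n - 1 : ℕ) * M := by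
          apply abs_sup'_sub_sup'_le
          intro j
          have hjlt : (j : Fin N).1 < n := by
            have := hadj i j.1 j.2; omega
          have hIH := IH j.1.1 hjlt j.1 rfl
          have habs : xγ j - xv j = V γ j.1 - v j.1 := by
            simp only [hxγ, hxv]
            ring
          rw [habs]
          refine le_trans hIH ?_
          have hcast : ((j : Fin N).1 : ℝ) ≤ ((n - 1 : ℕ) : ℝ) := by
            have : (j : Fin N).1 ≤ n - 1 := by omega
            exact_mod_cast this
          have := mul_le_mul_of_nonneg_right
            (mul_le_mul_of_nonneg_left hcast (le_of_lt hγ)) hM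
          linarith
        have hcastn : ((n - 1 : ℕ) : ℝ) + 1 = (n : ℝ) := by
          have : (n - 1) + 1 = n := by omega
          exact_mod_cast this
        calc |V γ i - v i|
            = |(smaxF (fun q => γ * Ω i q) xγ - Finset.univ.sup' Finset.univ_nonempty xγ) +
              (Finset.univ.sup' Finset.univ_nonempty xγ -
                Finset.univ.sup' Finset.univ_nonempty xv)| := by
              rw [hVi, hvi]; ring_nf
          _ ≤ |smaxF (fun q => γ * Ω i q) xγ - Finset.univ.sup' Finset.univ_nonempty xγ| +
              |Finset.univ.sup' Finset.univ_nonempty xγ -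
                Finset.univ.sup' Finset.univ_nonempty xv| := abs_add_le _ _
          _ ≤ γ * M + γ * (n - 1 : ℕ) * M := add_le_add hstep1 hstep2
          _ = γ * (((n - 1 : ℕ) : ℝ) + 1) * M := by ring
          _ = γ * n * M := by rw [hcastn]
  -- convergence
  rw [Metric.tendsto_nhdsWithin_nhds]
  intro ε hε
  have hD : (0 : ℝ) < (N : ℝ) * M + 1 := by positivity
  refine ⟨ε / ((N : ℝ) * M + 1), by positivity, ?_⟩
  intro γ hγ hd
  have hγ0 : 0 < γ := hγ
  rw [Real.dist_eq] at hd ⊢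
  have hγlt : γ < ε / ((N : ℝ) * M + 1) := by
    rw [sub_zero] at hd
    calc γ ≤ |γ| := le_abs_self γ
      _ < _ := hd
  have hkey := key γ hγ0 n'.1 n' rfl
  rw [hvLP] at hkey
  refine lt_of_le_of_lt hkey ?_
  have h1 : (n'.1 : ℝ) * M ≤ (N : ℝ) * M := by
    have : (n'.1 : ℝ) ≤ (N : ℝ) := by
      have : n'.1 ≤ N := le_of_lt n'.2
      exact_mod_cast this
    exact mul_le_mul_of_nonneg_right this hM
  have h2 : γ * ((N : ℝ) * M + 1) < ε := by
    rw [← lt_div_iff₀ hD]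
    exact hγlt
  nlinarith
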